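/- Autonomous corollary: Let f : U → U be C¹ with V ∘ f = V for a C² function V : U → ℝ≥0 with V⁻¹(0) compact nonempty; suppose there are b, ε > 0 with V⁻¹([0,ε]) compact and ‖∇V‖² ≥ bV on V⁻¹([0,ε]), and δ > 0 with S_δ ⊆ U. Then for 0 < α < min(2/d, δ/L) (L, d as in the main theorem), any sequence x̃_{k+1} = f(x̃_k) - α∇V(f(x̃_k)) starting in V⁻¹([0,ε]) satisfies V(x̃_k) → 0 exponentially fast, with rate factor (1 - b(α - α²d/2)) per step. -/

import Mathlib

open Metric Set

/-!
Taylor's bound along the segment from `y` to `y - α∇V(y)`, with the Hessian bounded by `d`,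
gives `V(y - α∇V(y)) ≤ V(y) - (α - α²d/2)‖∇V(y)‖²`, and gradient domination `b V ≤ ‖∇V‖²`
turns this into a contraction by `1 - b(α - α²d/2)`. The step has length `α‖∇V(y)‖ ≤ αL < δ`,
so the segment stays in `S_δ`; since `V` decreases along the step and `V ∘ f = V`, the iterates
never leave `V⁻¹([0,ε])`.
-/

theorem le_add_deriv_mul_add_of_deriv2_le {φ φ' φ'' : ℝ → ℝ} {a b M : ℝ} (hab : a ≤ b)
    (hφ : ∀ t ∈ Icc a b, HasDerivAt φ (φ' t) t)
    (hφ' : ∀ t ∈ Icc a b, HasDerivAt φ' (φ'' t) t)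
    (hM : ∀ t ∈ Icc a b, φ'' t ≤ M) :
    φ b ≤ φ a + φ' a * (b - a) + M * (b - a) ^ 2 / 2 := by
  have hline : ∀ t, HasDerivAt (fun t => t - a) 1 t := fun t => (hasDerivAt_id t).sub_const a
  have hφ'_le : ∀ t ∈ Icc a b, φ' t ≤ φ' a + M * (t - a) :=
    image_le_of_deriv_right_le_deriv_boundary
      (fun t ht => (hφ' t ht).continuousAt.continuousWithinAt)
      (fun t ht => (hφ' t (Ico_subset_Icc_self ht)).hasDerivWithinAt) (by simp)
      (by fun_prop)
      (fun t _ => (((hline t).const_mul M).const_add (φ' a)).hasDerivWithinAt)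
      (fun t ht => by simpa using hM t (Ico_subset_Icc_self ht))
  refine image_le_of_deriv_right_le_deriv_boundary
    (B := fun t => φ a + φ' a * (t - a) + M * (t - a) ^ 2 / 2)
    (fun t ht => (hφ t ht).continuousAt.continuousWithinAt)
    (fun t ht => (hφ t (Ico_subset_Icc_self ht)).hasDerivWithinAt) (by simp)
    (by fun_prop) (fun t _ => ?_) (fun t ht => hφ'_le t (Ico_subset_Icc_self ht))
    (right_mem_Icc.2 hab)
  have := (((hline t).const_mul (φ' a)).const_add (φ a)).add
    ((((hline t).pow 2).const_mul M).div_const 2)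
  refine (this.congr_deriv ?_).hasDerivWithinAt
  norm_num
  ring

theorem le_add_fderiv_add_of_iteratedFDeriv_two_le {E : Type*} [NormedAddCommGroup E]
    [NormedSpace ℝ E] {V : E → ℝ} {S : Set E} (hS : IsOpen S) (hV : ContDiffOn ℝ 2 V S)
    {y w : E} {M : ℝ} (hseg : segment ℝ y (y + w) ⊆ S)
    (hM : ∀ x ∈ S, iteratedFDeriv ℝ 2 V x ![w, w] ≤ M) :
    V (y + w) ≤ V y + fderiv ℝ V y w + M / 2 := by
  have hγS : ∀ t ∈ Icc (0 : ℝ) 1, y + t • w ∈ S := fun t ht =>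
    hseg (by rw [segment_eq_image']; exact ⟨t, ht, by simp⟩)
  have hγ : ∀ t : ℝ, HasDerivAt (fun t : ℝ => y + t • w) w t := fun t => by
    simpa using ((hasDerivAt_id t).smul_const w).const_add y
  have hV' : ContDiffOn ℝ 1 (fderiv ℝ V) S :=
    ((contDiffOn_succ_iff_fderiv_of_isOpen (n := 1) hS).mp hV).2.2
  have hφ : ∀ t ∈ Icc (0 : ℝ) 1,
      HasDerivAt (fun t : ℝ => V (y + t • w)) (fderiv ℝ V (y + t • w) w) t := fun t ht =>
    ((hV.differentiableOn two_ne_zero).differentiableAt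
      (hS.mem_nhds (hγS t ht))).hasFDerivAt.comp_hasDerivAt t (hγ t)
  have hφ' : ∀ t ∈ Icc (0 : ℝ) 1, HasDerivAt (fun t : ℝ => fderiv ℝ V (y + t • w) w)
      (fderiv ℝ (fderiv ℝ V) (y + t • w) w w) t := fun t ht => by
    have h := ((hV'.differentiableOn one_ne_zero).differentiableAt
      (hS.mem_nhds (hγS t ht))).hasFDerivAt.comp_hasDerivAt t (hγ t)
    simpa using h.clm_apply (hasDerivAt_const t w)
  have key := le_add_deriv_mul_add_of_deriv2_le zero_le_one hφ hφ'
    (fun t ht => by simpa [iteratedFDeriv_two_apply] using hM _ (hγS t ht))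
  simpa using key

theorem iteratedFDeriv_two_le_of_forall_ne_zero {E : Type*} [NormedAddCommGroup E]
    [NormedSpace ℝ E] {V : E → ℝ} {x : E} {d : ℝ}
    (h : ∀ v, v ≠ 0 → iteratedFDeriv ℝ 2 V x ![v, v] < d * ‖v‖ ^ 2) (v : E) :
    iteratedFDeriv ℝ 2 V x ![v, v] ≤ d * ‖v‖ ^ 2 := by
  rcases eq_or_ne v 0 with rfl | hv
  · simp [iteratedFDeriv_two_apply]
  · exact (h v hv).le

theorem apply_sub_smul_gradient_le {E : Type*} [NormedAddCommGroup E] [InnerProductSpace ℝ E]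
    [CompleteSpace E] {V : E → ℝ} {S : Set E} (hS : IsOpen S) (hV : ContDiffOn ℝ 2 V S)
    {d α : ℝ} {y : E} (hd : ∀ x ∈ S, ∀ v, iteratedFDeriv ℝ 2 V x ![v, v] ≤ d * ‖v‖ ^ 2)
    (hseg : segment ℝ y (y - α • gradient V y) ⊆ S) :
    V (y - α • gradient V y) ≤ V y - (α - α ^ 2 * d / 2) * ‖gradient V y‖ ^ 2 := by
  rw [sub_eq_add_neg] at hseg ⊢
  have h := le_add_fderiv_add_of_iteratedFDeriv_two_le hS hV hseg (fun x hx => hd x hx _)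
  rw [← inner_gradient_left, inner_neg_right, inner_smul_right, real_inner_self_eq_norm_sq,
    norm_neg, norm_smul, Real.norm_eq_abs, mul_pow, sq_abs] at h
  linarith

theorem le_pow_mul_of_le_mul {u : ℕ → ℝ} {c : ℝ} (hu : ∀ k, 0 ≤ u k)
    (h : ∀ k, u (k + 1) ≤ c * u k) (k : ℕ) : u k ≤ c ^ k * u 0 := by
  rcases le_or_gt 0 c with hc | hc
  · induction k with
    | zero => simp
    | succ k ih => calc
        u (k + 1) ≤ c * u k := h k
        _ ≤ c * (c ^ k * u 0) := mul_le_mul_of_nonneg_left ih hc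
        _ = c ^ (k + 1) * u 0 := by ring
  · -- a negative factor forces the whole sequence to vanish
    have hu0 : u 0 = 0 := by nlinarith [h 0, hu 0, hu 1]
    cases k with
    | zero => simp
    | succ k => rw [hu0, mul_zero]; nlinarith [h k, hu k]

theorem discrete_extension_autonomous_general
    {n : ℕ} (U : Set (EuclideanSpace ℝ (Fin n)))
    (f : EuclideanSpace ℝ (Fin n) → EuclideanSpace ℝ (Fin n))
    (hfmaps : ∀ x ∈ U, f x ∈ U)
    (V : EuclideanSpace ℝ (Fin n) → ℝ) (hV : ContDiffOn ℝ 2 V U)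
    (hVnn : ∀ x ∈ U, 0 ≤ V x)
    (hinv : ∀ x ∈ U, V (f x) = V x)
    (b ε : ℝ)
    (K : Set (EuclideanSpace ℝ (Fin n))) (hK : K = {x ∈ U | V x ≤ ε})
    (hgrad : ∀ x ∈ K, b * V x ≤ ‖gradient V x‖ ^ 2)
    (δ : ℝ) (hδ : 0 < δ)
    (Sδ : Set (EuclideanSpace ℝ (Fin n))) (hSδ : Sδ = {x | Metric.infDist x K < δ})
    (hSδU : Sδ ⊆ U)
    (L : ℝ) (hLpos : 0 < L) (hL : IsGreatest ((fun x => ‖gradient V x‖) '' K) L)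
    (d : ℝ) (hdpos : 0 < d)
    (hd : ∀ x ∈ Sδ, ∀ v : EuclideanSpace ℝ (Fin n), v ≠ 0 →
      iteratedFDeriv ℝ 2 V x ![v, v] < d * ‖v‖ ^ 2)
    (α : ℝ) (hα : 0 < α) (hα2 : α < 2 / d) (hα3 : α < δ / L)
    (xt : ℕ → EuclideanSpace ℝ (Fin n)) (hx0 : xt 0 ∈ K)
    (hstep : ∀ k, xt (k + 1) = f (xt k) - α • gradient V (f (xt k))) :
    ∀ k, V (xt k) ≤ (1 - b * (α - α ^ 2 * d / 2)) ^ k * V (xt 0) := by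
  have hKU : K ⊆ U := hK ▸ fun x hx => hx.1
  have hK_V : ∀ y ∈ K, V y ≤ ε := hK ▸ fun x hx => hx.2
  have hSδ_open : IsOpen Sδ := hSδ ▸ isOpen_lt (continuous_infDist_pt K) continuous_const
  have hball : ∀ y ∈ K, ball y δ ⊆ Sδ := fun y hy x hx =>
    hSδ ▸ (infDist_le_dist_of_mem hy).trans_lt hx
  have hs : 0 ≤ α - α ^ 2 * d / 2 := by nlinarith [(lt_div_iff₀ hdpos).mp hα2]
  have hdescent : ∀ y ∈ K, y - α • gradient V y ∈ K ∧
      V (y - α • gradient V y) ≤ (1 - b * (α - α ^ 2 * d / 2)) * V y := by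
    intro y hy
    have hmem : y - α • gradient V y ∈ ball y δ := by
      rw [mem_ball, dist_eq_norm, sub_sub_cancel_left, norm_neg, norm_smul,
        Real.norm_of_nonneg hα.le]
      calc α * ‖gradient V y‖ ≤ α * L := by gcongr; exact hL.2 ⟨y, hy, rfl⟩
        _ < δ := (lt_div_iff₀ hLpos).mp hα3
    have hle := apply_sub_smul_gradient_le hSδ_open (hV.mono hSδU)
      (fun x hx => iteratedFDeriv_two_le_of_forall_ne_zero (hd x hx))
      (((convex_ball y δ).segment_subset (mem_ball_self hδ) hmem).trans (hball y hy))
    refine ⟨hK ▸ ⟨hSδU (hball y hy hmem), ?_⟩, ?_⟩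
    · nlinarith [hK_V y hy]
    · nlinarith [mul_le_mul_of_nonneg_left (hgrad y hy) hs]
  have hfK : ∀ y ∈ K, f y ∈ K := fun y hy =>
    hK ▸ ⟨hfmaps y (hKU hy), (hinv y (hKU hy)).trans_le (hK_V y hy)⟩
  have hxtK : ∀ k, xt k ∈ K := fun k => by
    induction k with
    | zero => exact hx0
    | succ k ih => exact hstep k ▸ (hdescent _ (hfK _ ih)).1
  refine le_pow_mul_of_le_mul (fun k => hVnn _ (hKU (hxtK k))) fun k => ?_
  rw [hstep k, ← hinv _ (hKU (hxtK k))]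
  exact (hdescent _ (hfK _ (hxtK k))).2

/-- Autonomous corollary of the main theorem: for `f : U → U` with `V ∘ f = V`,
the modified trajectory `x̃_{k+1} = f(x̃_k) - α∇V(f(x̃_k))` starting in
`V⁻¹([0,ε])` satisfies `V(x̃_k) ≤ (1 - b(α - α²d/2))^k V(x̃_0)`. -/
theorem discrete_extension_autonomous
    {n : ℕ} (U : Set (EuclideanSpace ℝ (Fin n)))
    (f : EuclideanSpace ℝ (Fin n) → EuclideanSpace ℝ (Fin n))
    (hf : ContDiffOn ℝ 1 f U) (hfmaps : ∀ x ∈ U, f x ∈ U)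
    (V : EuclideanSpace ℝ (Fin n) → ℝ) (hV : ContDiffOn ℝ 2 V U)
    (hVnn : ∀ x ∈ U, 0 ≤ V x)
    (hzero_cpt : IsCompact {x ∈ U | V x = 0}) (hzero_ne : {x ∈ U | V x = 0}.Nonempty)
    (hinv : ∀ x ∈ U, V (f x) = V x)
    (b ε : ℝ) (hb : 0 < b) (hε : 0 < ε)
    (K : Set (EuclideanSpace ℝ (Fin n))) (hK : K = {x ∈ U | V x ≤ ε})
    (hKc : IsCompact K)
    (hgrad : ∀ x ∈ K, b * V x ≤ ‖gradient V x‖ ^ 2)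
    (δ : ℝ) (hδ : 0 < δ)
    (Sδ : Set (EuclideanSpace ℝ (Fin n))) (hSδ : Sδ = {x | Metric.infDist x K < δ})
    (hSδU : Sδ ⊆ U)
    (L : ℝ) (hLpos : 0 < L) (hL : IsGreatest ((fun x => ‖gradient V x‖) '' K) L)
    (d : ℝ) (hdpos : 0 < d)
    (hd : ∀ x ∈ Sδ, ∀ v : EuclideanSpace ℝ (Fin n), v ≠ 0 →
      iteratedFDeriv ℝ 2 V x ![v, v] < d * ‖v‖ ^ 2)
    (α : ℝ) (hα : 0 < α) (hα2 : α < 2 / d) (hα3 : α < δ / L)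
    (xt : ℕ → EuclideanSpace ℝ (Fin n)) (hx0 : xt 0 ∈ K)
    (hstep : ∀ k, xt (k + 1) = f (xt k) - α • gradient V (f (xt k))) :
    ∀ k, V (xt k) ≤ (1 - b * (α - α ^ 2 * d / 2)) ^ k * V (xt 0) :=
  discrete_extension_autonomous_general U f hfmaps V hV hVnn hinv b ε K hK hgrad δ hδ Sδ hSδ hSδU L
    hLpos hL d hdpos hd α hα hα2 hα3 xt hx0 hstep
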